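/- arXiv:2509.17728 — 9 statements merged into one kernel-verified Lean document; each statement's English description precedes it below -/
import Mathlib

section
/- Let (Ω, F, P) be a probability space with a filtration (F_i)_{i∈ℕ}, and fix M ∈ ℕ, constants 0 < ν ≤ δ, β ≥ 0, σ ≥ 0, e ≥ 0, η ≥ 0, a vector w° ∈ ℝ^M, a vector b ∈ ℝ^M with ‖b‖ ≤ η e, and a step-size μ with 0 < μ < min{ν/δ², 2/ν}. Suppose w̃_{i-1} is F_{i-1}-measurable and square integrable, H_{i-1} is an F_{i-1}-measurable random symmetric M×M matrix satisfying ν I ≤ H_{i-1} ≤ δ I (in the Loewner order) almost surely, s_i is a square-integrable random vector with E[s_i | F_{i-1}] = 0 and E[‖s_i‖² | F_{i-1}] ≤ β² ‖w̃_{i-1} + w°‖² + σ² almost surely, and q_i is a random vector with ‖q_i‖ ≤ e almost surely. Define w̃_i = (I − μ H_{i-1}) w̃_{i-1} + μ s_i − μ η q_i − μ b. Then E‖w̃_i‖² ≤ (1 − μν/2 + 2μ²β²/(1 − μν/2)) E‖w̃_{i-1}‖² + 2μ²β²‖w°‖²/(1 − μν/2) + μ²σ²/(1 − μν/2) + 8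 μ η² e² / ν. -/
/-!
Write `g = (I - μH) w̃_{i-1}`, so that `w̃_i = (g + μ s_i) - μ(η q_i + b)`.
Since `ν ≤ H ≤ δ` and `μ δ² ≤ ν`, `‖g‖² ≤ (1 - μν) ‖w̃_{i-1}‖²` pointwise. The noise is a
martingale increment orthogonal to the `ℱ_{i-1}`-measurable `g`, so
`E‖g + μ s_i‖² = E‖g‖² + μ² E‖s_i‖²`, and its conditional variance bound controls `E‖s_i‖²`.
The bounded bias `μ(η q_i + b)` is split off by Young's inequality
`‖u - d‖² ≤ ‖u‖² / (1 - t) + ‖d‖² / t` with `t = μν/2`, and `1 - μν ≤ (1 - t)²` puts the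
result in the stated form.
-/

open MeasureTheory
open scoped RealInnerProductSpace

theorem add_sq_le_div_one_sub_add_div (a b : ℝ) {t : ℝ} (ht₀ : 0 < t) (ht₁ : t < 1) :
    (a + b) ^ 2 ≤ a ^ 2 / (1 - t) + b ^ 2 / t := by
  have h1t : 0 < 1 - t := by linarith
  rw [div_add_div _ _ h1t.ne' ht₀.ne', le_div_iff₀ (by positivity)]
  nlinarith [sq_nonneg (t * a - (1 - t) * b)]

theorem norm_sub_sq_le_div_one_sub_add_div {E : Type*} [SeminormedAddCommGroup E] (x y : E)
    {t : ℝ} (ht₀ : 0 < t) (ht₁ : t < 1) :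
    ‖x - y‖ ^ 2 ≤ ‖x‖ ^ 2 / (1 - t) + ‖y‖ ^ 2 / t :=
  (pow_le_pow_left₀ (norm_nonneg _) (norm_sub_le x y) 2).trans
    (add_sq_le_div_one_sub_add_div _ _ ht₀ ht₁)

theorem norm_sub_smul_sub_smul_sq_le {E : Type*} [SeminormedAddCommGroup E] [NormedSpace ℝ E]
    (u : E) {q b : E} {μ ν η e : ℝ} (hμ : 0 < μ) (hν : 0 < ν) (hμν : μ * ν < 2) (hη : 0 ≤ η)
    (hq : ‖q‖ ≤ e) (hb : ‖b‖ ≤ η * e) :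
    ‖u - (μ * η) • q - μ • b‖ ^ 2 ≤ ‖u‖ ^ 2 / (1 - μ * ν / 2) + 8 * μ * η ^ 2 * e ^ 2 / ν := by
  have hbias : ‖(μ * η) • q + μ • b‖ ≤ 2 * μ * η * e := calc
    _ ≤ μ * η * ‖q‖ + μ * ‖b‖ := by
      refine (norm_add_le _ _).trans_eq ?_
      rw [norm_smul, norm_smul, Real.norm_of_nonneg (by positivity), Real.norm_of_nonneg hμ.le]
    _ ≤ μ * η * e + μ * (η * e) := by gcongr
    _ = 2 * μ * η * e := by ring
  have hbias_sq : ‖(μ * η) • q + μ • b‖ ^ 2 / (μ * ν / 2) ≤ 8 * μ * η ^ 2 * e ^ 2 / ν := calc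
    _ ≤ (2 * μ * η * e) ^ 2 / (μ * ν / 2) := by gcongr
    _ = 8 * μ * η ^ 2 * e ^ 2 / ν := by field_simp; ring
  rw [sub_sub]
  linarith [norm_sub_sq_le_div_one_sub_add_div u ((μ * η) • q + μ • b) (t := μ * ν / 2)
    (by positivity) (by linarith)]

section InnerProductSpace

variable {E : Type*} [NormedAddCommGroup E] [InnerProductSpace ℝ E]

namespace LinearMap.IsSymmetric

variable {T : E →ₗ[ℝ] E}

-- Polarization: the upper bound at `δ x + T x` and positivity at `δ x - T x`.
theorem norm_apply_sq_le (hT : T.IsSymmetric) {δ : ℝ} (hδ : 0 < δ)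
    (hlo : ∀ z, 0 ≤ ⟪z, T z⟫) (hhi : ∀ z, ⟪z, T z⟫ ≤ δ * ‖z‖ ^ 2) (x : E) :
    ‖T x‖ ^ 2 ≤ δ ^ 2 * ‖x‖ ^ 2 := by
  have hplus := hhi (δ • x + T x)
  have hminus := hlo (δ • x - T x)
  have hTT : ⟪x, T (T x)⟫ = ‖T x‖ ^ 2 := by rw [← hT, real_inner_self_eq_norm_sq]
  simp only [map_add, map_sub, map_smul, inner_add_left, inner_add_right, inner_sub_left,
    inner_sub_right, real_inner_smul_left, real_inner_smul_right, hT x (T x), hTT] at hplus hminus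
  rw [norm_add_sq_real, norm_smul, real_inner_smul_left, Real.norm_eq_abs, abs_of_pos hδ]
    at hplus
  nlinarith [mul_le_mul_of_nonneg_left (hhi x) (by positivity : (0 : ℝ) ≤ 2 * δ ^ 2)]

theorem norm_sub_smul_apply_sq_le (hT : T.IsSymmetric) {ν δ μ : ℝ} (hν : 0 ≤ ν) (hδ : 0 < δ)
    (hlo : ∀ z, ν * ‖z‖ ^ 2 ≤ ⟪z, T z⟫) (hhi : ∀ z, ⟪z, T z⟫ ≤ δ * ‖z‖ ^ 2)
    (hμ : 0 ≤ μ) (hμδ : μ * δ ^ 2 ≤ ν) (x : E) :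
    ‖x - μ • T x‖ ^ 2 ≤ (1 - μ * ν) * ‖x‖ ^ 2 := by
  have hTx := hT.norm_apply_sq_le hδ (fun z => (mul_nonneg hν (sq_nonneg _)).trans (hlo z)) hhi x
  rw [norm_sub_sq_real, real_inner_smul_right, norm_smul, mul_pow, Real.norm_eq_abs, sq_abs]
  nlinarith [mul_le_mul_of_nonneg_left (hlo x) (by positivity : (0 : ℝ) ≤ 2 * μ),
    mul_le_mul_of_nonneg_left hTx (sq_nonneg μ),
    mul_le_mul_of_nonneg_right hμδ (mul_nonneg hμ (sq_nonneg ‖x‖))]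

end LinearMap.IsSymmetric

end InnerProductSpace

namespace Matrix

variable {n : Type*} [Fintype n] [DecidableEq n]

theorem _root_.MeasureTheory.StronglyMeasurable.toEuclideanLin_apply {Ω : Type*}
    {m : MeasurableSpace Ω} {A : Ω → Matrix n n ℝ} {x : Ω → EuclideanSpace ℝ n}
    (hA : StronglyMeasurable A) (hx : StronglyMeasurable x) :
    StronglyMeasurable fun ω => toEuclideanLin (A ω) (x ω) :=
  ((PiLp.continuous_toLp 2 _).comp (continuous_fst.matrix_mulVec
    ((PiLp.continuous_ofLp 2 _).comp continuous_snd))).comp_stronglyMeasurable (hA.prodMk hx)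

theorem IsSymm.norm_toEuclideanLin_one_sub_smul_apply_sq_le {A : Matrix n n ℝ} (hA : A.IsSymm)
    {ν δ μ : ℝ} (hν : 0 ≤ ν) (hδ : 0 < δ)
    (hlo : ∀ x, ν * ‖x‖ ^ 2 ≤ ⟪x, toEuclideanLin A x⟫)
    (hhi : ∀ x, ⟪x, toEuclideanLin A x⟫ ≤ δ * ‖x‖ ^ 2)
    (hμ : 0 ≤ μ) (hμδ : μ * δ ^ 2 ≤ ν) (x : EuclideanSpace ℝ n) :
    ‖toEuclideanLin (1 - μ • A) x‖ ^ 2 ≤ (1 - μ * ν) * ‖x‖ ^ 2 := by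
  have hT := isSymmetric_toEuclideanLin_iff.mpr (isHermitian_iff_isSelfAdjoint.mpr hA)
  simpa using hT.norm_sub_smul_apply_sq_le hν hδ hlo hhi hμ hμδ x

end Matrix

section ConditionalExpectation

variable {Ω E : Type*} {m m₀ : MeasurableSpace Ω} {μ : Measure Ω}

theorem MeasureTheory.MemLp.integrable_inner [NormedAddCommGroup E] [InnerProductSpace ℝ E]
    {f g : Ω → E} (hf : MemLp f 2 μ) (hg : MemLp g 2 μ) :
    Integrable (fun ω => ⟪f ω, g ω⟫) μ :=
  (hf.norm.integrable_mul hg.norm).mono (hf.1.inner hg.1)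
    (ae_of_all _ fun ω => by simpa using abs_real_inner_le_norm (f ω) (g ω))

theorem integral_le_of_condExp_le (hm : m ≤ m₀) [SigmaFinite (μ.trim hm)] {f g : Ω → ℝ}
    (hg : Integrable g μ) (hfg : μ[f | m] ≤ᵐ[μ] g) : ∫ ω, f ω ∂μ ≤ ∫ ω, g ω ∂μ := by
  rw [← integral_condExp hm]
  exact integral_mono_ae integrable_condExp hg hfg

theorem integral_norm_sq_le_of_condExp_norm_sq_le [NormedAddCommGroup E] [IsProbabilityMeasure μ]
    (hm : m ≤ m₀) {s w : Ω → E} (hw : MemLp w 2 μ) (w₀ : E) {β σ : ℝ}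
    (hs : ∀ᵐ ω ∂μ, μ[fun ω' => ‖s ω'‖ ^ 2 | m] ω ≤ β ^ 2 * ‖w ω + w₀‖ ^ 2 + σ ^ 2) :
    ∫ ω, ‖s ω‖ ^ 2 ∂μ ≤
      2 * β ^ 2 * ∫ ω, ‖w ω‖ ^ 2 ∂μ + 2 * β ^ 2 * ‖w₀‖ ^ 2 + σ ^ 2 := calc
  _ ≤ ∫ ω, (2 * β ^ 2 * ‖w ω‖ ^ 2 + (2 * β ^ 2 * ‖w₀‖ ^ 2 + σ ^ 2)) ∂μ := by
    refine integral_le_of_condExp_le hm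
      ((hw.norm.integrable_sq.const_mul _).add (integrable_const _)) ?_
    filter_upwards [hs] with ω hω
    have := add_sq_le (a := ‖w ω‖) (b := ‖w₀‖)
    have := pow_le_pow_left₀ (norm_nonneg _) (norm_add_le (w ω) w₀) 2
    nlinarith [sq_nonneg β]
  _ = 2 * β ^ 2 * ∫ ω, ‖w ω‖ ^ 2 ∂μ + 2 * β ^ 2 * ‖w₀‖ ^ 2 + σ ^ 2 := by
    rw [integral_add (hw.norm.integrable_sq.const_mul _) (integrable_const _),
      integral_const_mul, integral_const, probReal_univ, one_smul, add_assoc]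

variable [NormedAddCommGroup E] [InnerProductSpace ℝ E] [CompleteSpace E]

theorem integral_inner_eq_zero_of_condExp_eq_zero (hm : m ≤ m₀) [SigmaFinite (μ.trim hm)]
    {f g : Ω → E} (hf : StronglyMeasurable[m] f) (hfg : Integrable (fun ω => ⟪f ω, g ω⟫) μ)
    (hg : Integrable g μ) (hg₀ : μ[g | m] =ᵐ[μ] 0) : ∫ ω, ⟪f ω, g ω⟫ ∂μ = 0 := by
  rw [← integral_condExp hm]
  refine integral_eq_zero_of_ae ?_
  filter_upwards [condExp_bilin_of_stronglyMeasurable_left (innerSL ℝ) hf hfg hg, hg₀]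
    with ω hpull hω
  exact hpull.trans (by simp [hω])

theorem integral_norm_add_smul_sq_of_condExp_eq_zero [IsFiniteMeasure μ] (hm : m ≤ m₀)
    {f g : Ω → E} (hf : StronglyMeasurable[m] f) (hf₂ : MemLp f 2 μ) (hg₂ : MemLp g 2 μ)
    (hg₀ : μ[g | m] =ᵐ[μ] 0) (c : ℝ) :
    ∫ ω, ‖f ω + c • g ω‖ ^ 2 ∂μ = ∫ ω, ‖f ω‖ ^ 2 ∂μ + c ^ 2 * ∫ ω, ‖g ω‖ ^ 2 ∂μ := by
  have hcross : ∫ ω, ⟪f ω, g ω⟫ ∂μ = 0 :=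
    integral_inner_eq_zero_of_condExp_eq_zero hm hf (hf₂.integrable_inner hg₂)
      (hg₂.integrable one_le_two) hg₀
  have hexpand : ∀ ω,
      ‖f ω + c • g ω‖ ^ 2 = ‖f ω‖ ^ 2 + 2 * c * ⟪f ω, g ω⟫ + c ^ 2 * ‖g ω‖ ^ 2 := by
    intro ω
    rw [norm_add_sq_real, real_inner_smul_right, norm_smul, mul_pow, Real.norm_eq_abs, sq_abs]
    ring
  have hf_sq := hf₂.norm.integrable_sq
  have hf_cross : Integrable (fun ω => ‖f ω‖ ^ 2 + 2 * c * ⟪f ω, g ω⟫) μ :=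
    hf_sq.add ((hf₂.integrable_inner hg₂).const_mul _)
  simp_rw [hexpand]
  rw [integral_add hf_cross (hg₂.norm.integrable_sq.const_mul _),
    integral_add hf_sq ((hf₂.integrable_inner hg₂).const_mul _), integral_const_mul,
    integral_const_mul, hcross]
  ring

theorem integral_norm_add_smul_sq_le [IsProbabilityMeasure μ] (hm : m ≤ m₀) {g w s : Ω → E}
    (hg : StronglyMeasurable[m] g) (hg₂ : MemLp g 2 μ) (hw₂ : MemLp w 2 μ) (hs₂ : MemLp s 2 μ)
    (hs₀ : μ[s | m] =ᵐ[μ] 0) {ρ : ℝ} (hgw : ∀ᵐ ω ∂μ, ‖g ω‖ ^ 2 ≤ ρ * ‖w ω‖ ^ 2) (w₀ : E)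
    {β σ : ℝ} (hs : ∀ᵐ ω ∂μ, μ[fun ω' => ‖s ω'‖ ^ 2 | m] ω ≤ β ^ 2 * ‖w ω + w₀‖ ^ 2 + σ ^ 2)
    (c : ℝ) :
    ∫ ω, ‖g ω + c • s ω‖ ^ 2 ∂μ ≤ ρ * ∫ ω, ‖w ω‖ ^ 2 ∂μ +
      c ^ 2 * (2 * β ^ 2 * ∫ ω, ‖w ω‖ ^ 2 ∂μ + 2 * β ^ 2 * ‖w₀‖ ^ 2 + σ ^ 2) := by
  rw [integral_norm_add_smul_sq_of_condExp_eq_zero hm hg hg₂ hs₂ hs₀]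
  gcongr ?_ + _ * ?_
  · rw [← integral_const_mul]
    exact integral_mono_ae hg₂.norm.integrable_sq (hw₂.norm.integrable_sq.const_mul _) hgw
  · exact integral_norm_sq_le_of_condExp_norm_sq_le hm hw₂ w₀ hs

end ConditionalExpectation

theorem stmt0_general
    {Ω : Type*} {m0 : MeasurableSpace Ω} {P : Measure Ω} [IsProbabilityMeasure P]
    (ℱ : Filtration ℕ m0) (M : ℕ)
    (ν δ β σ e η : ℝ) (hν : 0 < ν) (hνδ : ν ≤ δ)
    (hη : 0 ≤ η)
    (wo b : EuclideanSpace ℝ (Fin M)) (hb : ‖b‖ ≤ η * e)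
    (μ : ℝ) (hμ0 : 0 < μ) (hμ : μ < min (ν / δ ^ 2) (2 / ν))
    (i : ℕ)
    (wprev : Ω → EuclideanSpace ℝ (Fin M))
    (hwprev_meas : StronglyMeasurable[ℱ (i - 1)] wprev)
    (hwprev_L2 : MemLp wprev 2 P)
    (H : Ω → Matrix (Fin M) (Fin M) ℝ)
    (hH_meas : StronglyMeasurable[ℱ (i - 1)] H)
    (hH_symm : ∀ᵐ ω ∂P, (H ω).IsSymm)
    (hH_bounds : ∀ᵐ ω ∂P, ∀ x : EuclideanSpace ℝ (Fin M),
      ν * ‖x‖ ^ 2 ≤ (inner ℝ x (Matrix.toEuclideanLin (H ω) x) : ℝ) ∧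
      (inner ℝ x (Matrix.toEuclideanLin (H ω) x) : ℝ) ≤ δ * ‖x‖ ^ 2)
    (s : Ω → EuclideanSpace ℝ (Fin M))
    (hs_L2 : MemLp s 2 P)
    (hs_mean : P[s | ℱ (i - 1)] =ᵐ[P] 0)
    (hs_var : ∀ᵐ ω ∂P,
      (P[fun ω' => ‖s ω'‖ ^ 2 | ℱ (i - 1)]) ω ≤ β ^ 2 * ‖wprev ω + wo‖ ^ 2 + σ ^ 2)
    (q : Ω → EuclideanSpace ℝ (Fin M))
    (hq : ∀ᵐ ω ∂P, ‖q ω‖ ≤ e)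
    (wnext : Ω → EuclideanSpace ℝ (Fin M))
    (hwnext : ∀ ω, wnext ω =
      Matrix.toEuclideanLin (1 - μ • H ω) (wprev ω) + μ • s ω - (μ * η) • q ω - μ • b) :
    ∫ ω, ‖wnext ω‖ ^ 2 ∂P ≤
      (1 - μ * ν / 2 + 2 * μ ^ 2 * β ^ 2 / (1 - μ * ν / 2)) * ∫ ω, ‖wprev ω‖ ^ 2 ∂P +
      2 * μ ^ 2 * β ^ 2 * ‖wo‖ ^ 2 / (1 - μ * ν / 2) +
      μ ^ 2 * σ ^ 2 / (1 - μ * ν / 2) + 8 * μ * η ^ 2 * e ^ 2 / ν := by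
  have hδ : 0 < δ := hν.trans_le hνδ
  have hμδ : μ * δ ^ 2 < ν := (lt_div_iff₀ (by positivity)).mp (hμ.trans_le (min_le_left _ _))
  have hμν : μ * ν < 2 := (lt_div_iff₀ hν).mp (hμ.trans_le (min_le_right _ _))
  have ht : 0 < 1 - μ * ν / 2 := by linarith
  have hm := ℱ.le (i - 1)
  let g := fun ω => Matrix.toEuclideanLin (1 - μ • H ω) (wprev ω)
  have hg_meas : StronglyMeasurable[ℱ (i - 1)] g :=
    (stronglyMeasurable_const.sub (hH_meas.const_smul μ)).toEuclideanLin_apply hwprev_meas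
  have hg_contr : ∀ᵐ ω ∂P, ‖g ω‖ ^ 2 ≤ (1 - μ * ν) * ‖wprev ω‖ ^ 2 := by
    filter_upwards [hH_symm, hH_bounds] with ω hsymm hbounds
    exact hsymm.norm_toEuclideanLin_one_sub_smul_apply_sq_le hν.le hδ (fun x => (hbounds x).1)
      (fun x => (hbounds x).2) hμ0.le hμδ.le (wprev ω)
  have hg_L2 : MemLp g 2 P := hwprev_L2.of_le (hg_meas.mono hm).aestronglyMeasurable
    (hg_contr.mono fun ω h => (sq_le_sq₀ (norm_nonneg _) (norm_nonneg _)).mp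
      (h.trans (mul_le_of_le_one_left (sq_nonneg _) (by nlinarith))))
  have hu_sq : Integrable (fun ω => ‖g ω + μ • s ω‖ ^ 2) P :=
    (hg_L2.add (hs_L2.const_smul μ)).norm.integrable_sq
  have hnext : ∀ᵐ ω ∂P, ‖wnext ω‖ ^ 2 ≤
      ‖g ω + μ • s ω‖ ^ 2 / (1 - μ * ν / 2) + 8 * μ * η ^ 2 * e ^ 2 / ν := by
    filter_upwards [hq] with ω hqω
    rw [hwnext ω]
    exact norm_sub_smul_sub_smul_sq_le _ hμ0 hν hμν hη hqω hb
  calc ∫ ω, ‖wnext ω‖ ^ 2 ∂P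
      ≤ ∫ ω, (‖g ω + μ • s ω‖ ^ 2 / (1 - μ * ν / 2) + 8 * μ * η ^ 2 * e ^ 2 / ν) ∂P :=
        integral_mono_of_nonneg (ae_of_all _ fun ω => by positivity)
          ((hu_sq.div_const _).add (integrable_const _)) hnext
    _ = (∫ ω, ‖g ω + μ • s ω‖ ^ 2 ∂P) / (1 - μ * ν / 2) + 8 * μ * η ^ 2 * e ^ 2 / ν := by
        rw [integral_add (hu_sq.div_const _) (integrable_const _), integral_div, integral_const,
          probReal_univ, one_smul]
    _ ≤ ((1 - μ * ν / 2) ^ 2 * ∫ ω, ‖wprev ω‖ ^ 2 ∂P + μ ^ 2 * (2 * β ^ 2 *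
          ∫ ω, ‖wprev ω‖ ^ 2 ∂P + 2 * β ^ 2 * ‖wo‖ ^ 2 + σ ^ 2)) / (1 - μ * ν / 2)
          + 8 * μ * η ^ 2 * e ^ 2 / ν := by
        grw [integral_norm_add_smul_sq_le hm hg_meas hg_L2 hwprev_L2 hs_L2 hs_mean hg_contr wo
          hs_var μ]
        gcongr
        nlinarith [sq_nonneg (μ * ν)]
    _ = _ := by field_simp; ring

/-- Single-step mean-square-error bound for the decentralized stochastic proximal
gradient recursion: with `w̃ᵢ = (I − μH_{i−1}) w̃_{i−1} + μ sᵢ − μη qᵢ − μ b`,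
under the stated conditions on the averaged Hessian `H_{i−1}`, the gradient noise
`sᵢ`, the bounded subgradient `qᵢ`, and the bias `b` with `‖b‖ ≤ ηe`, one has
`E‖w̃ᵢ‖² ≤ (1 − μν/2 + 2μ²β²/(1 − μν/2)) E‖w̃_{i−1}‖²
  + 2μ²β²‖w°‖²/(1 − μν/2) + μ²σ²/(1 − μν/2) + 8μη²e²/ν`. -/
theorem stmt0
    {Ω : Type*} {m0 : MeasurableSpace Ω} {P : Measure Ω} [IsProbabilityMeasure P]
    (ℱ : Filtration ℕ m0) (M : ℕ)
    (ν δ β σ e η : ℝ) (hν : 0 < ν) (hνδ : ν ≤ δ) (hβ : 0 ≤ β) (hσ : 0 ≤ σ)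
    (he : 0 ≤ e) (hη : 0 ≤ η)
    (wo b : EuclideanSpace ℝ (Fin M)) (hb : ‖b‖ ≤ η * e)
    (μ : ℝ) (hμ0 : 0 < μ) (hμ : μ < min (ν / δ ^ 2) (2 / ν))
    (i : ℕ) (hi : 1 ≤ i)
    (wprev : Ω → EuclideanSpace ℝ (Fin M))
    (hwprev_meas : StronglyMeasurable[ℱ (i - 1)] wprev)
    (hwprev_L2 : MemLp wprev 2 P)
    (H : Ω → Matrix (Fin M) (Fin M) ℝ)
    (hH_meas : StronglyMeasurable[ℱ (i - 1)] H)
    (hH_symm : ∀ᵐ ω ∂P, (H ω).IsSymm)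
    (hH_bounds : ∀ᵐ ω ∂P, ∀ x : EuclideanSpace ℝ (Fin M),
      ν * ‖x‖ ^ 2 ≤ (inner ℝ x (Matrix.toEuclideanLin (H ω) x) : ℝ) ∧
      (inner ℝ x (Matrix.toEuclideanLin (H ω) x) : ℝ) ≤ δ * ‖x‖ ^ 2)
    (s : Ω → EuclideanSpace ℝ (Fin M))
    (hs_L2 : MemLp s 2 P)
    (hs_mean : P[s | ℱ (i - 1)] =ᵐ[P] 0)
    (hs_var : ∀ᵐ ω ∂P,
      (P[fun ω' => ‖s ω'‖ ^ 2 | ℱ (i - 1)]) ω ≤ β ^ 2 * ‖wprev ω + wo‖ ^ 2 + σ ^ 2)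
    (q : Ω → EuclideanSpace ℝ (Fin M))
    (hq : ∀ᵐ ω ∂P, ‖q ω‖ ≤ e)
    (wnext : Ω → EuclideanSpace ℝ (Fin M))
    (hwnext : ∀ ω, wnext ω =
      Matrix.toEuclideanLin (1 - μ • H ω) (wprev ω) + μ • s ω - (μ * η) • q ω - μ • b) :
    ∫ ω, ‖wnext ω‖ ^ 2 ∂P ≤
      (1 - μ * ν / 2 + 2 * μ ^ 2 * β ^ 2 / (1 - μ * ν / 2)) * ∫ ω, ‖wprev ω‖ ^ 2 ∂P +
      2 * μ ^ 2 * β ^ 2 * ‖wo‖ ^ 2 / (1 - μ * ν / 2) +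
      μ ^ 2 * σ ^ 2 / (1 - μ * ν / 2) + 8 * μ * η ^ 2 * e ^ 2 / ν :=
  stmt0_general ℱ M ν δ β σ e η hν hνδ hη wo b hb μ hμ0 hμ i wprev hwprev_meas hwprev_L2 H hH_meas
    hH_symm hH_bounds s hs_L2 hs_mean hs_var q hq wnext hwnext
end

section
/- Let J ≥ 1, let c_1,…,c_J > 0, β ≥ 0, γ > 0, and b_1 < b_2 < … < b_J be reals, and define h : ℝ → ℝ by h(x) = Σ_{j=1}^J c_j (|x − b_j| + (β/2)(x − b_j)²). If v ∈ ℝ satisfies v < b_1 − γ Σ_{j=1}^J c_j + βγ Σ_{j=1}^J c_j (b_1 − b_j), then the function x ↦ h(x) + (1/(2γ))(x − v)² has the unique minimizer x* = (v + γ Σ_{j=1}^J c_j + βγ Σ_{j=1}^J c_j b_j) / (1 + βγ Σ_{j=1}^J c_j). -/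
/-- Closed-form proximal operator of the weighted elastic-net sum on the leftmost
interval `I₀`: if `v < b₁ − γ Σⱼ cⱼ + βγ Σⱼ cⱼ(b₁ − bⱼ)`, then
`x ↦ h(x) + (1/(2γ))(x − v)²` has the unique minimizer
`x* = (v + γ Σⱼ cⱼ + βγ Σⱼ cⱼ bⱼ)/(1 + βγ Σⱼ cⱼ)`. -/
theorem stmt9 (J : ℕ) (hJ : 0 < J) (c b : Fin J → ℝ) (hc : ∀ j, 0 < c j)
    (β γ : ℝ) (hβ : 0 ≤ β) (hγ : 0 < γ) (hb : StrictMono b)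
    (v : ℝ)
    (hv : v < b ⟨0, hJ⟩ - γ * (∑ j, c j) + β * γ * ∑ j, c j * (b ⟨0, hJ⟩ - b j))
    (xstar : ℝ)
    (hxstar : xstar = (v + γ * (∑ j, c j) + β * γ * ∑ j, c j * b j)
      / (1 + β * γ * ∑ j, c j)) :
    ∀ x : ℝ, x ≠ xstar →
      (∑ j, c j * (|xstar - b j| + β / 2 * (xstar - b j) ^ 2))
          + 1 / (2 * γ) * (xstar - v) ^ 2
        < (∑ j, c j * (|x - b j| + β / 2 * (x - b j) ^ 2))
          + 1 / (2 * γ) * (x - v) ^ 2 := by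
  intro x hx
  have hne : Nonempty (Fin J) := ⟨⟨0, hJ⟩⟩
  set S := ∑ j, c j with hS
  set T := ∑ j, c j * b j with hT
  set U := ∑ j, c j * (b j)^2 with hU
  have hSpos : 0 < S := Finset.sum_pos (fun j _ => hc j) Finset.univ_nonempty
  have hγ' : γ ≠ 0 := ne_of_gt hγ
  have hD : (0:ℝ) < 1 + β * γ * S := by positivity
  have hsum0 : ∑ j, c j * (b ⟨0, hJ⟩ - b j) = S * b ⟨0, hJ⟩ - T := by
    simp [mul_sub, Finset.sum_sub_distrib, hS, hT, Finset.sum_mul, mul_comm]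
  have heq : xstar * (1 + β * γ * S) = v + γ * S + β * γ * T := by
    rw [hxstar]; field_simp
  have heq2 : xstar * (1/γ + β * S) = v * (1/γ) + S + β * T := by
    field_simp at heq ⊢
    linear_combination heq
  have hx0 : xstar < b ⟨0, hJ⟩ := by
    rw [hxstar, div_lt_iff₀ hD]
    rw [hsum0] at hv
    nlinarith
  have hxj : ∀ j, xstar ≤ b j := fun j =>
    le_of_lt (lt_of_lt_of_le hx0 (hb.monotone (by simp [Fin.le_def])))
  have expand : ∀ y : ℝ, ∑ j, c j * ((b j - y) + β / 2 * (y - b j) ^ 2)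
      = T - S * y + β / 2 * (S * y^2 - 2 * T * y + U) := by
    intro y
    have h1 : ∀ j, c j * ((b j - y) + β / 2 * (y - b j) ^ 2)
        = c j * b j - y * c j
          + ((β / 2 * y^2) * c j - (β * y) * (c j * b j) + (β / 2) * (c j * (b j)^2)) := by
      intro j; ring
    simp only [h1, Finset.sum_add_distrib, Finset.sum_sub_distrib, ← Finset.mul_sum]
    ring
  have habs : ∑ j, c j * (|xstar - b j| + β / 2 * (xstar - b j) ^ 2)
      = ∑ j, c j * ((b j - xstar) + β / 2 * (xstar - b j) ^ 2) := by
    apply Finset.sum_congr rfl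
    intro j _
    rw [abs_of_nonpos (by linarith [hxj j]), neg_sub]
  have hlb : ∑ j, c j * ((b j - x) + β / 2 * (x - b j) ^ 2)
      ≤ ∑ j, c j * (|x - b j| + β / 2 * (x - b j) ^ 2) := by
    apply Finset.sum_le_sum
    intro j _
    apply mul_le_mul_of_nonneg_left _ (le_of_lt (hc j))
    have := neg_abs_le (x - b j)
    linarith
  rw [habs, expand xstar]
  have key : (T - S * xstar + β / 2 * (S * xstar^2 - 2 * T * xstar + U))
        + 1 / (2 * γ) * (xstar - v) ^ 2
        + (β / 2 * S + 1 / (2 * γ)) * (x - xstar)^2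
      = (T - S * x + β / 2 * (S * x^2 - 2 * T * x + U))
        + 1 / (2 * γ) * (x - v) ^ 2 := by
    linear_combination (xstar - x) * heq2
  have hquad : 0 < (β / 2 * S + 1 / (2 * γ)) * (x - xstar)^2 := by
    have h1 : x - xstar ≠ 0 := sub_ne_zero.mpr hx
    have h2 : (0:ℝ) < (x - xstar)^2 := by positivity
    have h3 : (0:ℝ) < β / 2 * S + 1 / (2 * γ) := by positivity
    exact mul_pos h3 h2
  have hlast : T - S * x + β / 2 * (S * x^2 - 2 * T * x + U)
      ≤ ∑ j, c j * (|x - b j| + β / 2 * (x - b j) ^ 2) := by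
    rw [← expand x]; exact hlb
  linarith [key, hquad, hlast]
end

section
/- Let J ≥ 1, let c_1,…,c_J > 0, β ≥ 0, γ > 0, and b_1 < b_2 < … < b_J be reals, and define h : ℝ → ℝ by h(x) = Σ_{j=1}^J c_j (|x − b_j| + (β/2)(x − b_j)²). Fix n ∈ {1,…,J}. If v ∈ ℝ satisfies b_n − γ(Σ_{j=n}^J c_j − Σ_{j=1}^{n−1} c_j) + βγ Σ_{j=1}^J c_j (b_n − b_j) ≤ v < b_n − γ(Σ_{j=n+1}^J c_j − Σ_{j=1}^{n} c_j) + βγ Σ_{j=1}^J c_j (b_n − b_j), then the function x ↦ h(x) + (1/(2γ))(x − v)² has the unique minimizer x* = b_n. -/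
section aux

variable {J : ℕ} (n : Fin J)

lemma part_Iio_Ici (f : Fin J → ℝ) :
    (∑ j ∈ Finset.Iio n, f j) + (∑ j ∈ Finset.Ici n, f j) = ∑ j, f j := by
  rw [← Finset.sum_union (by simp [Finset.disjoint_left])]
  congr 1
  ext j
  simp [Finset.mem_union, lt_or_ge]

lemma part_Iic_Ioi (f : Fin J → ℝ) :
    (∑ j ∈ Finset.Iic n, f j) + (∑ j ∈ Finset.Ioi n, f j) = ∑ j, f j := by
  rw [← Finset.sum_union (by simp [Finset.disjoint_left])]
  congr 1
  ext j
  simp [Finset.mem_union]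
  omega

end aux

set_option maxHeartbeats 1000000

/-- Closed-form proximal operator of the weighted elastic-net sum on the dead-zone
interval `I_{n,1}`: if
`bₙ − γ(Σ_{j≥n} cⱼ − Σ_{j<n} cⱼ) + βγ Σⱼ cⱼ(bₙ − bⱼ) ≤ v <
 bₙ − γ(Σ_{j>n} cⱼ − Σ_{j≤n} cⱼ) + βγ Σⱼ cⱼ(bₙ − bⱼ)`,
then `x ↦ h(x) + (1/(2γ))(x − v)²` has the unique minimizer `x* = bₙ`. -/
theorem stmt10 (J : ℕ) (hJ : 0 < J) (c b : Fin J → ℝ) (hc : ∀ j, 0 < c j)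
    (β γ : ℝ) (hβ : 0 ≤ β) (hγ : 0 < γ) (hb : StrictMono b)
    (n : Fin J) (v : ℝ)
    (hvl : b n - γ * ((∑ j ∈ Finset.Ici n, c j) - ∑ j ∈ Finset.Iio n, c j)
      + β * γ * (∑ j, c j * (b n - b j)) ≤ v)
    (hvr : v < b n - γ * ((∑ j ∈ Finset.Ioi n, c j) - ∑ j ∈ Finset.Iic n, c j)
      + β * γ * (∑ j, c j * (b n - b j))) :
    ∀ x : ℝ, x ≠ b n →
      (∑ j, c j * (|b n - b j| + β / 2 * (b n - b j) ^ 2))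
          + 1 / (2 * γ) * (b n - v) ^ 2
        < (∑ j, c j * (|x - b j| + β / 2 * (x - b j) ^ 2))
          + 1 / (2 * γ) * (x - v) ^ 2 := by
  intro x hx
  have hbm : Monotone b := hb.monotone
  have hq : 1 / (2 * γ) * (x - v) ^ 2
      = 1 / (2 * γ) * (b n - v) ^ 2 + (b n - v) / γ * (x - b n)
        + 1 / (2 * γ) * (x - b n) ^ 2 := by
    field_simp
    ring
  have hxn : x - b n ≠ 0 := sub_ne_zero.mpr hx
  have hd2 : 0 < 1 / (2 * γ) * (x - b n) ^ 2 := by positivity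
  rcases lt_or_gt_of_ne hx with hlt | hgt
  · -- x < b n
    have key : ∀ j ∈ Finset.univ, c j * (|b n - b j| + β / 2 * (b n - b j) ^ 2)
        + c j * ((if j < n then (1:ℝ) else -1) + β * (b n - b j)) * (x - b n)
        ≤ c j * (|x - b j| + β / 2 * (x - b j) ^ 2) := by
      intro j _
      have hcj := (hc j).le
      by_cases hj : j < n
      · simp only [hj, if_true]
        have h1 : b j < b n := hb hj
        have h2 : |b n - b j| = b n - b j := abs_of_pos (by linarith)
        have h3 : x - b j ≤ |x - b j| := le_abs_self _
        have h4 : 0 ≤ c j * β * (x - b n) ^ 2 :=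
          mul_nonneg (mul_nonneg hcj hβ) (sq_nonneg _)
        nlinarith [mul_le_mul_of_nonneg_left h3 hcj]
      · simp only [hj, if_false]
        have h1 : b n ≤ b j := hbm (le_of_not_gt hj)
        have h2 : |b n - b j| = b j - b n := by
          rw [abs_of_nonpos (by linarith)]; ring
        have h3 : b j - x ≤ |x - b j| := by
          rw [abs_sub_comm]; exact le_abs_self _
        have h4 : 0 ≤ c j * β * (x - b n) ^ 2 :=
          mul_nonneg (mul_nonneg hcj hβ) (sq_nonneg _)
        nlinarith [mul_le_mul_of_nonneg_left h3 hcj]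
    have hsum := Finset.sum_le_sum key
    rw [Finset.sum_add_distrib] at hsum
    have hsplit : (∑ j, c j * ((if j < n then (1:ℝ) else -1) + β * (b n - b j)) * (x - b n))
        = ((∑ j ∈ Finset.Iio n, c j) - (∑ j ∈ Finset.Ici n, c j)
            + β * (∑ j, c j * (b n - b j))) * (x - b n) := by
      rw [← Finset.sum_mul]
      congr 1
      have h1 : ∀ j, c j * ((if j < n then (1:ℝ) else -1) + β * (b n - b j))
          = (if j < n then c j else -c j) + β * (c j * (b n - b j)) := by
        intro j; split <;> ring
      simp_rw [h1]
      rw [Finset.sum_add_distrib, ← Finset.mul_sum]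
      congr 1
      rw [← part_Iio_Ici n (fun j => if j < n then c j else -c j)]
      rw [Finset.sum_congr rfl (fun j hj => if_pos (Finset.mem_Iio.mp hj)),
        Finset.sum_congr rfl (fun j hj => if_neg (not_lt.mpr (Finset.mem_Ici.mp hj)))]
      rw [Finset.sum_neg_distrib]
      ring
    rw [hsplit] at hsum
    -- from hvl: D₋ ≤ 0
    have hD : (∑ j ∈ Finset.Iio n, c j) - (∑ j ∈ Finset.Ici n, c j)
        + β * (∑ j, c j * (b n - b j)) + (b n - v) / γ ≤ 0 := by
      have h2 : (b n - v) / γ ≤ ((∑ j ∈ Finset.Ici n, c j) - ∑ j ∈ Finset.Iio n, c j)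
          - β * (∑ j, c j * (b n - b j)) := by
        rw [div_le_iff₀ hγ]
        calc b n - v ≤ γ * ((∑ j ∈ Finset.Ici n, c j) - ∑ j ∈ Finset.Iio n, c j)
            - β * γ * (∑ j, c j * (b n - b j)) := by linarith
          _ = (((∑ j ∈ Finset.Ici n, c j) - ∑ j ∈ Finset.Iio n, c j)
            - β * (∑ j, c j * (b n - b j))) * γ := by ring
      linarith
    have hDd : 0 ≤ ((∑ j ∈ Finset.Iio n, c j) - (∑ j ∈ Finset.Ici n, c j)
        + β * (∑ j, c j * (b n - b j))) * (x - b n) + (b n - v) / γ * (x - b n) := by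
      have h5 := mul_nonneg (neg_nonneg.2 hD) (neg_nonneg.2 (by linarith : x - b n ≤ 0))
      nlinarith [h5]
    rw [hq]
    linarith [hsum, hDd, hd2]
  · -- x > b n
    have key : ∀ j ∈ Finset.univ, c j * (|b n - b j| + β / 2 * (b n - b j) ^ 2)
        + c j * ((if j ≤ n then (1:ℝ) else -1) + β * (b n - b j)) * (x - b n)
        ≤ c j * (|x - b j| + β / 2 * (x - b j) ^ 2) := by
      intro j _
      have hcj := (hc j).le
      by_cases hj : j ≤ n
      · simp only [hj, if_true]
        have h1 : b j ≤ b n := hbm hj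
        have h2 : |b n - b j| = b n - b j := abs_of_nonneg (by linarith)
        have h3 : x - b j ≤ |x - b j| := le_abs_self _
        have h4 : 0 ≤ c j * β * (x - b n) ^ 2 :=
          mul_nonneg (mul_nonneg hcj hβ) (sq_nonneg _)
        nlinarith [mul_le_mul_of_nonneg_left h3 hcj]
      · simp only [hj, if_false]
        have h1 : b n < b j := hb (lt_of_not_ge hj)
        have h2 : |b n - b j| = b j - b n := by
          rw [abs_of_neg (by linarith)]; ring
        have h3 : b j - x ≤ |x - b j| := by
          rw [abs_sub_comm]; exact le_abs_self _
        have h4 : 0 ≤ c j * β * (x - b n) ^ 2 :=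
          mul_nonneg (mul_nonneg hcj hβ) (sq_nonneg _)
        rw [h2]
        nlinarith [mul_le_mul_of_nonneg_left h3 hcj, h4]
    have hsum := Finset.sum_le_sum key
    rw [Finset.sum_add_distrib] at hsum
    have hsplit : (∑ j, c j * ((if j ≤ n then (1:ℝ) else -1) + β * (b n - b j)) * (x - b n))
        = ((∑ j ∈ Finset.Iic n, c j) - (∑ j ∈ Finset.Ioi n, c j)
            + β * (∑ j, c j * (b n - b j))) * (x - b n) := by
      rw [← Finset.sum_mul]
      congr 1
      have h1 : ∀ j, c j * ((if j ≤ n then (1:ℝ) else -1) + β * (b n - b j))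
          = (if j ≤ n then c j else -c j) + β * (c j * (b n - b j)) := by
        intro j; split <;> ring
      simp_rw [h1]
      rw [Finset.sum_add_distrib, ← Finset.mul_sum]
      congr 1
      rw [← part_Iic_Ioi n (fun j => if j ≤ n then c j else -c j)]
      rw [Finset.sum_congr rfl (fun j hj => if_pos (Finset.mem_Iic.mp hj)),
        Finset.sum_congr rfl (fun j hj => if_neg (not_le.mpr (Finset.mem_Ioi.mp hj)))]
      rw [Finset.sum_neg_distrib]
      ring
    rw [hsplit] at hsum
    -- from hvr: D₊ > 0
    have hD : 0 < (∑ j ∈ Finset.Iic n, c j) - (∑ j ∈ Finset.Ioi n, c j)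
        + β * (∑ j, c j * (b n - b j)) + (b n - v) / γ := by
      have h2 : ((∑ j ∈ Finset.Ioi n, c j) - ∑ j ∈ Finset.Iic n, c j)
          - β * (∑ j, c j * (b n - b j)) < (b n - v) / γ := by
        rw [lt_div_iff₀ hγ]
        calc (((∑ j ∈ Finset.Ioi n, c j) - ∑ j ∈ Finset.Iic n, c j)
            - β * (∑ j, c j * (b n - b j))) * γ
            = γ * ((∑ j ∈ Finset.Ioi n, c j) - ∑ j ∈ Finset.Iic n, c j)
            - β * γ * (∑ j, c j * (b n - b j)) := by ring
          _ < b n - v := by linarith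
      linarith
    have hDd : 0 < ((∑ j ∈ Finset.Iic n, c j) - (∑ j ∈ Finset.Ioi n, c j)
        + β * (∑ j, c j * (b n - b j))) * (x - b n) + (b n - v) / γ * (x - b n) := by
      have h5 := mul_pos hD (by linarith : 0 < x - b n)
      nlinarith [h5]
    rw [hq]
    linarith [hsum, hDd, hd2]
end

section
/- Let J ≥ 1, let c_1,…,c_J > 0, β ≥ 0, γ > 0, and b_1 < b_2 < … < b_J be reals, and define h : ℝ → ℝ by h(x) = Σ_{j=1}^J c_j (|x − b_j| + (β/2)(x − b_j)²). Fix n ∈ {1,…,J}. Suppose v ∈ ℝ satisfies b_n − γ(Σ_{j=n+1}^J c_j − Σ_{j=1}^{n} c_j) + βγ Σ_{j=1}^J c_j (b_n − b_j) ≤ v, and in addition, if n < J, that v < b_{n+1} − γ(Σ_{j=n+1}^J c_j − Σ_{j=1}^{n} c_j) + βγ Σ_{j=1}^J c_j (b_{n+1} − b_j). Then the function x ↦ h(x) + (1/(2γ))(x − v)² has the unique minimizer x* = (v + γ(Σ_{j=n+1}^J c_j − Σ_{j=1}^{n} c_j) + βγ Σ_{j=1}^J c_j b_j) / (1 + βγ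 Σ_{j=1}^J c_j). -/
set_option maxHeartbeats 1000000 in
/-- Closed-form proximal operator of the weighted elastic-net sum on the interval
`I_{n,2}`: if `bₙ − γ(Σ_{j>n} cⱼ − Σ_{j≤n} cⱼ) + βγ Σⱼ cⱼ(bₙ − bⱼ) ≤ v` and,
when `n < J`, `v < b_{n+1} − γ(Σ_{j>n} cⱼ − Σ_{j≤n} cⱼ) + βγ Σⱼ cⱼ(b_{n+1} − bⱼ)`,
then `x ↦ h(x) + (1/(2γ))(x − v)²` has the unique minimizer
`x* = (v + γ(Σ_{j>n} cⱼ − Σ_{j≤n} cⱼ) + βγ Σⱼ cⱼ bⱼ)/(1 + βγ Σⱼ cⱼ)`. -/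
theorem stmt11 (J : ℕ) (hJ : 0 < J) (c b : Fin J → ℝ) (hc : ∀ j, 0 < c j)
    (β γ : ℝ) (hβ : 0 ≤ β) (hγ : 0 < γ) (hb : StrictMono b)
    (n : Fin J) (v : ℝ)
    (hvl : b n - γ * ((∑ j ∈ Finset.Ioi n, c j) - ∑ j ∈ Finset.Iic n, c j)
      + β * γ * (∑ j, c j * (b n - b j)) ≤ v)
    (hvr : ∀ hn : (n : ℕ) + 1 < J,
      v < b ⟨(n : ℕ) + 1, hn⟩
        - γ * ((∑ j ∈ Finset.Ioi n, c j) - ∑ j ∈ Finset.Iic n, c j)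
        + β * γ * (∑ j, c j * (b ⟨(n : ℕ) + 1, hn⟩ - b j)))
    (xstar : ℝ)
    (hxstar : xstar = (v + γ * ((∑ j ∈ Finset.Ioi n, c j) - ∑ j ∈ Finset.Iic n, c j)
        + β * γ * ∑ j, c j * b j) / (1 + β * γ * ∑ j, c j)) :
    ∀ x : ℝ, x ≠ xstar →
      (∑ j, c j * (|xstar - b j| + β / 2 * (xstar - b j) ^ 2))
          + 1 / (2 * γ) * (xstar - v) ^ 2
        < (∑ j, c j * (|x - b j| + β / 2 * (x - b j) ^ 2))
          + 1 / (2 * γ) * (x - v) ^ 2 := by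
  intro x hx
  have hne : Nonempty (Fin J) := ⟨n⟩
  set A := ∑ j ∈ Finset.Ioi n, c j with hA
  set B := ∑ j ∈ Finset.Iic n, c j with hB
  set S := ∑ j, c j with hSdef
  set T := ∑ j, c j * b j with hT
  have hS : 0 < S := Finset.sum_pos (fun j _ => hc j) Finset.univ_nonempty
  have hP : 0 < 1 + β * γ * S := by nlinarith [mul_nonneg (mul_nonneg hβ hγ.le) hS.le]
  have heq : xstar * (1 + β * γ * S) = v + γ * (A - B) + β * γ * T := by
    rw [hxstar]; exact div_mul_cancel₀ _ hP.ne'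
  have expand : ∀ y : ℝ, ∑ j, c j * (y - b j) = S * y - T := by
    intro y
    simp only [mul_sub, Finset.sum_sub_distrib, hSdef, hT, ← Finset.sum_mul]
  -- lower bound : b n ≤ xstar
  have hbn : b n ≤ xstar := by
    rw [expand] at hvl
    have h1 : b n * (1 + β * γ * S) ≤ xstar * (1 + β * γ * S) := by nlinarith [heq, hvl]
    exact le_of_mul_le_mul_right h1 hP
  -- upper bound
  have hup : ∀ j ∈ Finset.Ioi n, xstar ≤ b j := by
    intro j hj
    have hj' : n < j := Finset.mem_Ioi.mp hj
    have hn : (n : ℕ) + 1 < J := Nat.lt_of_le_of_lt (Nat.succ_le_of_lt hj') j.isLt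
    have hv2 := hvr hn
    rw [expand] at hv2
    have h1 : xstar * (1 + β * γ * S) < b ⟨(n : ℕ) + 1, hn⟩ * (1 + β * γ * S) := by
      nlinarith [heq, hv2]
    have h2 : xstar < b ⟨(n : ℕ) + 1, hn⟩ := lt_of_mul_lt_mul_right h1 hP.le
    have h3 : b ⟨(n : ℕ) + 1, hn⟩ ≤ b j := by
      apply hb.monotone
      rw [Fin.le_def]
      exact Nat.succ_le_of_lt hj'
    linarith
  have hdisj : Disjoint (Finset.Iic n) (Finset.Ioi n) := Finset.disjoint_left.mpr fun j hj hj2 => absurd (Finset.mem_Ioi.mp hj2) (not_lt.mpr (Finset.mem_Iic.mp hj))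
  have hsplit : (Finset.univ : Finset (Fin J)) = Finset.Iic n ∪ Finset.Ioi n := by
    ext j; simp [le_or_gt]
  -- absolute value part
  have hIic : ∑ j ∈ Finset.Iic n, (c j * |xstar - b j| + c j * (x - xstar))
      ≤ ∑ j ∈ Finset.Iic n, c j * |x - b j| := by
    apply Finset.sum_le_sum
    intro j hj
    have hbj : b j ≤ xstar := le_trans (hb.monotone (Finset.mem_Iic.mp hj)) hbn
    have h2 : |xstar - b j| = xstar - b j := abs_of_nonneg (by linarith)
    have h3 := mul_le_mul_of_nonneg_left (le_abs_self (x - b j)) (hc j).le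
    rw [h2]; nlinarith [h3]
  have hIoi : ∑ j ∈ Finset.Ioi n, (c j * |xstar - b j| - c j * (x - xstar))
      ≤ ∑ j ∈ Finset.Ioi n, c j * |x - b j| := by
    apply Finset.sum_le_sum
    intro j hj
    have hbj : xstar ≤ b j := hup j hj
    have h2 : |xstar - b j| = b j - xstar := by rw [abs_sub_comm]; exact abs_of_nonneg (by linarith)
    have h3 := mul_le_mul_of_nonneg_left (neg_abs_le (x - b j)) (hc j).le
    rw [h2]; nlinarith [h3]
  have key1 : (∑ j, c j * |xstar - b j|) + (B - A) * (x - xstar) ≤ ∑ j, c j * |x - b j| := by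
    rw [show (∑ j, c j * |xstar - b j|) = ∑ j ∈ Finset.Iic n ∪ Finset.Ioi n, c j * |xstar - b j| by rw [← hsplit],
       show (∑ j, c j * |x - b j|) = ∑ j ∈ Finset.Iic n ∪ Finset.Ioi n, c j * |x - b j| by rw [← hsplit],
       Finset.sum_union hdisj, Finset.sum_union hdisj]
    rw [Finset.sum_add_distrib, ← Finset.sum_mul] at hIic
    rw [Finset.sum_sub_distrib, ← Finset.sum_mul] at hIoi
    rw [← hB] at hIic
    rw [← hA] at hIoi
    linarith
  -- quadratic parts
  have key2 : ∑ j, c j * (β / 2 * (x - b j) ^ 2)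
      = (∑ j, c j * (β / 2 * (xstar - b j) ^ 2)) + β * (S * xstar - T) * (x - xstar)
        + β / 2 * S * (x - xstar) ^ 2 := by
    have h : ∀ j ∈ (Finset.univ : Finset (Fin J)), c j * (β / 2 * (x - b j) ^ 2)
        = c j * (β / 2 * (xstar - b j) ^ 2) + ((β * xstar * (x - xstar)) * c j
          - (β * (x - xstar)) * (c j * b j) + (β / 2 * (x - xstar) ^ 2) * c j) := by
      intro j _; ring
    rw [Finset.sum_congr rfl h, Finset.sum_add_distrib, Finset.sum_add_distrib,
      Finset.sum_sub_distrib, ← Finset.mul_sum, ← Finset.mul_sum, ← Finset.mul_sum,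
      ← hSdef, ← hT]
    ring
  have keyQ : 1 / (2 * γ) * (x - v) ^ 2
      = 1 / (2 * γ) * (xstar - v) ^ 2 + (1 / γ) * (xstar - v) * (x - xstar)
        + 1 / (2 * γ) * (x - xstar) ^ 2 := by
    field_simp; ring
  have hgrad : ((B - A) + β * (S * xstar - T) + (xstar - v) * (1 / γ)) * (x - xstar) = 0 := by
    have hg : (B - A) + β * (S * xstar - T) + (xstar - v) * (1 / γ) = 0 := by
      have hγ' : (γ:ℝ) ≠ 0 := hγ.ne'
      field_simp
      linear_combination heq
    rw [hg]; ring
  have hsum_split : ∀ y : ℝ, (∑ j, c j * (|y - b j| + β / 2 * (y - b j) ^ 2))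
      = (∑ j, c j * |y - b j|) + ∑ j, c j * (β / 2 * (y - b j) ^ 2) := by
    intro y
    rw [← Finset.sum_add_distrib]
    exact Finset.sum_congr rfl fun j _ => by ring
  rw [hsum_split, hsum_split, key2, keyQ]
  have hd2 : 0 < (x - xstar) ^ 2 := lt_of_le_of_ne (sq_nonneg _) (Ne.symm (pow_ne_zero 2 (sub_ne_zero.mpr hx)))
  have hq : 0 < 1 / (2 * γ) := by positivity
  have hgrad' : (B - A) * (x - xstar) + β * (S * xstar - T) * (x - xstar)
      + 1 / γ * (xstar - v) * (x - xstar) = 0 := by linear_combination hgrad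
  have hpos1 : 0 ≤ β / 2 * S * (x - xstar) ^ 2 :=
    mul_nonneg (mul_nonneg (by linarith) hS.le) hd2.le
  have hpos2 : 0 < 1 / (2 * γ) * (x - xstar) ^ 2 := mul_pos hq hd2
  linarith [key1]
end

section
/- Let J ≥ 1, let c_1,…,c_J > 0, β ≥ 0, γ > 0, and b_1 < b_2 < … < b_J be reals. Define for n ∈ {1,…,J}: L_n = b_n − γ(Σ_{j=n}^J c_j − Σ_{j=1}^{n−1} c_j) + βγ Σ_{j=1}^J c_j (b_n − b_j) and R_n = b_n − γ(Σ_{j=n+1}^J c_j − Σ_{j=1}^{n} c_j) + βγ Σ_{j=1}^J c_j (b_n − b_j). Then L_1 < R_1 < L_2 < R_2 < … < L_J < R_J; consequently, the intervals I_0 = (−∞, L_1), the intervals I_{n,1} = [L_n, R_n) for n = 1,…,J, the intervals I_{n,2} = [R_n, L_{n+1}) for n = 1,…,J−1, and I_{J,2} = [R_J, ∞) are pairwise disjoint and their union is all of ℝ. -/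
/-- The interval endpoints `Lₙ, Rₙ` of the closed-form proximal operator of the
weighted elastic-net sum satisfy `L₁ < R₁ < L₂ < R₂ < … < L_J < R_J`, and the
intervals `I₀ = (−∞, L₁)`, `I_{n,1} = [Lₙ, Rₙ)`, `I_{n,2} = [Rₙ, L_{n+1})`
(for `n < J`) and `I_{J,2} = [R_J, ∞)` are pairwise disjoint and cover `ℝ`. -/
theorem stmt12 (J : ℕ) (hJ : 0 < J) (c b : Fin J → ℝ) (hc : ∀ j, 0 < c j)
    (β γ : ℝ) (hβ : 0 ≤ β) (hγ : 0 < γ) (hb : StrictMono b)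
    (L R : Fin J → ℝ)
    (hL : ∀ n, L n = b n - γ * ((∑ j ∈ Finset.Ici n, c j) - ∑ j ∈ Finset.Iio n, c j)
      + β * γ * (∑ j, c j * (b n - b j)))
    (hR : ∀ n, R n = b n - γ * ((∑ j ∈ Finset.Ioi n, c j) - ∑ j ∈ Finset.Iic n, c j)
      + β * γ * (∑ j, c j * (b n - b j)))
    (I : Option (Fin J × Bool) → Set ℝ)
    (hI0 : I none = Set.Iio (L ⟨0, hJ⟩))
    (hI1 : ∀ n : Fin J, I (some (n, true)) = Set.Ico (L n) (R n))
    (hI2 : ∀ n : Fin J, I (some (n, false)) =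
      if hn : (n : ℕ) + 1 < J then Set.Ico (R n) (L ⟨(n : ℕ) + 1, hn⟩)
      else Set.Ici (R n)) :
    (∀ n, L n < R n) ∧
    (∀ (n : Fin J) (hn : (n : ℕ) + 1 < J), R n < L ⟨(n : ℕ) + 1, hn⟩) ∧
    Pairwise (Function.onFun Disjoint I) ∧
    (⋃ o, I o) = Set.univ := by
  have hcsum : (0:ℝ) ≤ ∑ j, c j := Finset.sum_nonneg fun j _ => (hc j).le
  -- L n < R n
  have hLR : ∀ n, L n < R n := by
    intro n
    rw [hL, hR]
    have e1 : Finset.Ici n = insert n (Finset.Ioi n) := by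
      ext j
      simp [Finset.mem_insert, le_iff_lt_or_eq, eq_comm, or_comm]
    have e2 : Finset.Iic n = insert n (Finset.Iio n) := by
      ext j
      simp [Finset.mem_insert, le_iff_lt_or_eq, or_comm]
    rw [e1, e2, Finset.sum_insert (by simp), Finset.sum_insert (by simp)]
    nlinarith [mul_pos hγ (hc n)]
  -- R n < L (n+1)
  have hsucc : ∀ (n : Fin J) (hn : (n : ℕ) + 1 < J), R n < L ⟨(n : ℕ) + 1, hn⟩ := by
    intro n hn
    set m : Fin J := ⟨(n : ℕ) + 1, hn⟩ with hm
    have hmv : (m : ℕ) = (n : ℕ) + 1 := rfl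
    have e1 : Finset.Ici m = Finset.Ioi n := by
      ext j
      simp only [Finset.mem_Ici, Finset.mem_Ioi, Fin.le_def, Fin.lt_def, hmv]
      omega
    have e2 : Finset.Iio m = Finset.Iic n := by
      ext j
      simp only [Finset.mem_Iio, Finset.mem_Iic, Fin.le_def, Fin.lt_def, hmv]
      omega
    have hbm : b n < b m := hb (by simp only [Fin.lt_def, hmv]; omega)
    have hsum : (∑ j, c j * (b m - b j)) - (∑ j, c j * (b n - b j))
        = (∑ j, c j) * (b m - b n) := by
      rw [← Finset.sum_sub_distrib, Finset.sum_mul]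
      exact Finset.sum_congr rfl fun j _ => by ring
    have hnn : 0 ≤ β * γ * ((∑ j, c j) * (b m - b n)) :=
      mul_nonneg (mul_nonneg hβ hγ.le) (mul_nonneg hcsum (by linarith))
    have hkey : β * γ * (∑ j, c j * (b m - b j)) - β * γ * (∑ j, c j * (b n - b j))
        = β * γ * ((∑ j, c j) * (b m - b n)) := by
      rw [← mul_sub, hsum]
    rw [hL, hR, e1, e2]
    linarith [hkey, hnn, hbm]
  -- chain: n < m → R n < L m
  have hRLlt : ∀ n m : Fin J, n < m → R n < L m := by
    have key : ∀ k : ℕ, ∀ (hk : k < J) (n : Fin J), (n : ℕ) < k → R n < L ⟨k, hk⟩ := by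
      intro k
      induction k with
      | zero => intro hk n h; omega
      | succ k ih =>
        intro hk n h
        rcases Nat.lt_or_ge (n : ℕ) k with h' | h'
        · have hkJ : k < J := Nat.lt_of_succ_lt hk
          calc R n < L ⟨k, hkJ⟩ := ih hkJ n h'
            _ < R ⟨k, hkJ⟩ := hLR _
            _ < L ⟨k + 1, hk⟩ := hsucc ⟨k, hkJ⟩ hk
        · have hk' : (n : ℕ) = k := by omega
          subst hk'
          exact hsucc n hk
    intro n m hnm
    have := key (m : ℕ) m.isLt n hnm
    simpa using this
  have hLLle : ∀ n m : Fin J, n ≤ m → L n ≤ L m := by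
    intro n m h
    rcases eq_or_lt_of_le h with rfl | h
    · exact le_rfl
    · exact le_of_lt ((hLR n).trans (hRLlt n m h))
  have hRRle : ∀ n m : Fin J, n ≤ m → R n ≤ R m := by
    intro n m h
    rcases eq_or_lt_of_le h with rfl | h
    · exact le_rfl
    · exact le_of_lt ((hRLlt n m h).trans (hLR m))
  have hLRlt : ∀ n m : Fin J, n ≤ m → L n < R m := fun n m h =>
    lt_of_le_of_lt (hLLle n m h) (hLR m)
  -- helper: I (some (n,false)) membership facts
  have zero_le : ∀ n : Fin J, (⟨0, hJ⟩ : Fin J) ≤ n := fun n => by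
    simp [Fin.le_def]
  refine ⟨hLR, hsucc, ?_, ?_⟩
  · -- Pairwise disjoint
    -- helper lemmas for ordered cases
    have case0t : ∀ n : Fin J, Disjoint (I none) (I (some (n, true))) := by
      intro n
      rw [hI0, hI1, Set.disjoint_left]
      intro x hx hx'
      simp only [Set.mem_Iio, Set.mem_Ico] at hx hx'
      have := hLLle ⟨0, hJ⟩ n (zero_le n)
      linarith [hx'.1]
    have case0f : ∀ n : Fin J, Disjoint (I none) (I (some (n, false))) := by
      intro n
      rw [hI0, hI2, Set.disjoint_left]
      intro x hx hx'
      have h1 : L ⟨0, hJ⟩ ≤ L n := hLLle ⟨0, hJ⟩ n (zero_le n)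
      have h2 : L n < R n := hLR n
      simp only [Set.mem_Iio] at hx
      split_ifs at hx' with hn
      · simp only [Set.mem_Ico] at hx'
        linarith [hx'.1]
      · simp only [Set.mem_Ici] at hx'
        linarith
    have casett : ∀ n m : Fin J, n < m →
        Disjoint (I (some (n, true))) (I (some (m, true))) := by
      intro n m hnm
      rw [hI1, hI1, Set.disjoint_left]
      intro x hx hx'
      simp only [Set.mem_Ico] at hx hx'
      have := hRLlt n m hnm
      linarith [hx.2, hx'.1]
    have casetf : ∀ n m : Fin J, n ≤ m →
        Disjoint (I (some (n, true))) (I (some (m, false))) := by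
      intro n m hnm
      rw [hI1, hI2, Set.disjoint_left]
      intro x hx hx'
      simp only [Set.mem_Ico] at hx
      have hRR := hRRle n m hnm
      split_ifs at hx' with hn
      · simp only [Set.mem_Ico] at hx'
        linarith [hx.2, hx'.1]
      · simp only [Set.mem_Ici] at hx'
        linarith [hx.2]
    have caseft : ∀ n m : Fin J, n < m →
        Disjoint (I (some (n, false))) (I (some (m, true))) := by
      intro n m hnm
      rw [hI1, hI2, Set.disjoint_left]
      intro x hx hx'
      simp only [Set.mem_Ico] at hx'
      split_ifs at hx with hn
      · simp only [Set.mem_Ico] at hx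
        have hle : (⟨(n : ℕ) + 1, hn⟩ : Fin J) ≤ m := by
          simp only [Fin.le_def]
          exact hnm
        have := hLLle _ _ hle
        linarith [hx.2, hx'.1]
      · exfalso
        have := m.isLt
        have : (m : ℕ) ≤ (n : ℕ) := by omega
        exact absurd hnm (not_lt.mpr this)
    have caseff : ∀ n m : Fin J, n < m →
        Disjoint (I (some (n, false))) (I (some (m, false))) := by
      intro n m hnm
      rw [hI2, hI2, Set.disjoint_left]
      intro x hx hx'
      split_ifs at hx with hn
      · simp only [Set.mem_Ico] at hx
        have hle : (⟨(n : ℕ) + 1, hn⟩ : Fin J) ≤ m := by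
          simp only [Fin.le_def]; exact hnm
        have h1 := hLLle _ _ hle
        have h2 := hLR m
        split_ifs at hx' with hm
        · simp only [Set.mem_Ico] at hx'
          linarith [hx.2, hx'.1]
        · simp only [Set.mem_Ici] at hx'
          linarith [hx.2]
      · exfalso
        have := m.isLt
        have : (m : ℕ) ≤ (n : ℕ) := by omega
        exact absurd hnm (not_lt.mpr this)
    intro o1 o2 hne
    unfold Function.onFun
    match o1, o2 with
    | none, none => exact absurd rfl hne
    | none, some (n, true) => exact case0t n
    | none, some (n, false) => exact case0f n
    | some (n, true), none => exact (case0t n).symm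
    | some (n, false), none => exact (case0f n).symm
    | some (n, true), some (m, true) =>
      rcases lt_trichotomy n m with h | h | h
      · exact casett n m h
      · exact absurd (by rw [h]) hne
      · exact (casett m n h).symm
    | some (n, true), some (m, false) =>
      rcases le_or_gt n m with h | h
      · exact casetf n m h
      · exact (caseft m n h).symm
    | some (n, false), some (m, true) =>
      rcases le_or_gt m n with h | h
      · exact (casetf m n h).symm
      · exact caseft n m h
    | some (n, false), some (m, false) =>
      rcases lt_trichotomy n m with h | h | h
      · exact caseff n m h
      · exact absurd (by rw [h]) hne
      · exact (caseff m n h).symm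
  · -- union covers ℝ
    rw [Set.eq_univ_iff_forall]
    intro x
    rw [Set.mem_iUnion]
    by_cases hx0 : x < L ⟨0, hJ⟩
    · exact ⟨none, by rw [hI0]; exact hx0⟩
    · push_neg at hx0
      set S : Finset (Fin J) := Finset.univ.filter (fun n => L n ≤ x) with hS
      have hSne : S.Nonempty := ⟨⟨0, hJ⟩, by simp [hS, hx0]⟩
      set n : Fin J := S.max' hSne with hn
      have hLn : L n ≤ x := by
        have := S.max'_mem hSne
        simpa [hS] using this
      have hmax : ∀ m : Fin J, L m ≤ x → m ≤ n := by
        intro m hm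
        exact S.le_max' m (by simp [hS, hm])
      by_cases hxR : x < R n
      · exact ⟨some (n, true), by rw [hI1]; exact ⟨hLn, hxR⟩⟩
      · push_neg at hxR
        refine ⟨some (n, false), ?_⟩
        rw [hI2]
        split_ifs with hn1
        · refine ⟨hxR, ?_⟩
          by_contra h
          push_neg at h
          have := hmax ⟨(n : ℕ) + 1, hn1⟩ h
          simp only [Fin.le_def] at this
          omega
        · exact hxR
end

section
/- Let J ≥ 1, let c_1,…,c_J > 0, λ > 0, γ > 0, and let b_1,…,b_J be distinct reals. Define h₀ : ℝ → ℝ by h₀(b_j) = −λ c_j for j = 1,…,J and h₀(x) = 0 for x ∉ {b_1,…,b_J}. If v ∈ ℝ satisfies v ∉ {b_1,…,b_J} and (v − b_j)² > 2γλ c_j for every j ∈ {1,…,J}, then x = v is the unique global minimizer over ℝ of the function φ(x) = h₀(x) + (1/(2γ))(x − v)². -/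
/-!
Off the breakpoints `h₀` vanishes, so `φ(v) = 0` while `φ(x) = (x - v)² / (2γ) > 0` for every
other non-breakpoint `x`. At a breakpoint `bⱼ` the penalty gain `λcⱼ` is smaller than the
quadratic cost `(bⱼ - v)² / (2γ)` exactly by the threshold condition.
-/

section IndicatorSum

variable {ι α M : Type*} [Fintype ι] [DecidableEq α] [AddCommMonoid M]

theorem Finset.sum_ite_eq_zero_of_notMem_range {b : ι → α} {x : α} (hx : x ∉ Set.range b)
    (f : ι → M) : ∑ j, (if x = b j then f j else 0) = 0 :=
  Finset.sum_eq_zero fun j _ => if_neg fun h => hx ⟨j, h.symm⟩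

theorem Finset.sum_ite_apply_eq_of_injective {b : ι → α} (hb : Function.Injective b)
    (f : ι → M) (j : ι) : ∑ k, (if b j = b k then f k else 0) = f j := by
  classical
  rw [Finset.sum_congr rfl fun k _ => if_congr hb.eq_iff rfl rfl, Fintype.sum_ite_eq]

end IndicatorSum

theorem neg_add_inv_two_mul_mul_sq_pos {γ a d : ℝ} (hγ : 0 < γ) (h : 2 * γ * a < d ^ 2) :
    0 < -a + 1 / (2 * γ) * d ^ 2 := by
  have : a < d ^ 2 / (2 * γ) := (lt_div_iff₀ (by positivity)).2 (by linarith)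
  rw [one_div_mul_eq_div]
  linarith

theorem stmt13_general (J : ℕ) (c b : Fin J → ℝ)
    (lam γ : ℝ) (hγ : 0 < γ) (hb : Function.Injective b)
    (h₀ : ℝ → ℝ) (hh₀ : ∀ x, h₀ x = ∑ j, if x = b j then -lam * c j else 0)
    (v : ℝ) (hv : v ∉ Set.range b)
    (hthr : ∀ j, 2 * γ * lam * c j < (v - b j) ^ 2) :
    ∀ x : ℝ, x ≠ v →
      h₀ v + 1 / (2 * γ) * (v - v) ^ 2 < h₀ x + 1 / (2 * γ) * (x - v) ^ 2 := by
  intro x hx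
  rw [hh₀ v, Finset.sum_ite_eq_zero_of_notMem_range hv, sub_self, zero_pow two_ne_zero,
    mul_zero, add_zero]
  by_cases hxb : x ∈ Set.range b
  · obtain ⟨j, rfl⟩ := hxb
    rw [hh₀, Finset.sum_ite_apply_eq_of_injective hb, neg_mul, ← neg_sub, neg_sq]
    exact neg_add_inv_two_mul_mul_sq_pos hγ (by rw [← mul_assoc]; exact hthr j)
  · rw [hh₀, Finset.sum_ite_eq_zero_of_notMem_range hxb, zero_add]
    have : x - v ≠ 0 := sub_ne_zero.mpr hx
    positivity

/-- Proximal operator of the weighted ℓ₀-sum, case of no shrinkage: if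
`v ∉ {b₁,…,b_J}` and `(v − bⱼ)² > 2γλcⱼ` for all `j`, then `x = v` is the unique
global minimizer of `φ(x) = h₀(x) + (1/(2γ))(x − v)²`, where `h₀(bⱼ) = −λcⱼ` and
`h₀ = 0` off the breakpoints. -/
theorem stmt13 (J : ℕ) (hJ : 0 < J) (c b : Fin J → ℝ) (hc : ∀ j, 0 < c j)
    (lam γ : ℝ) (hlam : 0 < lam) (hγ : 0 < γ) (hb : Function.Injective b)
    (h₀ : ℝ → ℝ) (hh₀ : ∀ x, h₀ x = ∑ j, if x = b j then -lam * c j else 0)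
    (v : ℝ) (hv : v ∉ Set.range b)
    (hthr : ∀ j, 2 * γ * lam * c j < (v - b j) ^ 2) :
    ∀ x : ℝ, x ≠ v →
      h₀ v + 1 / (2 * γ) * (v - v) ^ 2 < h₀ x + 1 / (2 * γ) * (x - v) ^ 2 :=
  stmt13_general J c b lam γ hγ hb h₀ hh₀ v hv hthr
end

section
/- Let J ≥ 1, let c_1,…,c_J > 0, λ > 0, γ > 0, and let b_1,…,b_J be distinct reals. Define h₀ : ℝ → ℝ by h₀(b_j) = −λ c_j for j = 1,…,J and h₀(x) = 0 for x ∉ {b_1,…,b_J}, and for v ∈ ℝ set f(j) = −λ c_j + (1/(2γ))(b_j − v)² and m = min_{1 ≤ j ≤ J} f(j). If v ∉ {b_1,…,b_J} and m < 0, then the set of global minimizers over ℝ of φ(x) = h₀(x) + (1/(2γ))(x − v)² is exactly {b_j : f(j) = m}; in particular, v is not a minimizer. -/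
/-- Proximal operator of the weighted ℓ₀-sum, snapping case: if `v ∉ {b₁,…,b_J}`
and `m = minⱼ f(j) < 0` where `f(j) = −λcⱼ + (1/(2γ))(bⱼ − v)²`, then the set of
global minimizers of `φ(x) = h₀(x) + (1/(2γ))(x − v)²` is `{bⱼ : f(j) = m}`; in
particular `v` is not a minimizer. -/
theorem stmt14 (J : ℕ) (hJ : 0 < J) (c b : Fin J → ℝ) (hc : ∀ j, 0 < c j)
    (lam γ : ℝ) (hlam : 0 < lam) (hγ : 0 < γ) (hb : Function.Injective b)
    (h₀ : ℝ → ℝ) (hh₀ : ∀ x, h₀ x = ∑ j, if x = b j then -lam * c j else 0)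
    (v : ℝ) (hv : v ∉ Set.range b)
    (f : Fin J → ℝ) (hf : ∀ j, f j = -lam * c j + 1 / (2 * γ) * (b j - v) ^ 2)
    (m : ℝ) (hm : m = ⨅ j, f j) (hm0 : m < 0) :
    {x : ℝ | ∀ y : ℝ, h₀ x + 1 / (2 * γ) * (x - v) ^ 2
        ≤ h₀ y + 1 / (2 * γ) * (y - v) ^ 2}
      = b '' {j | f j = m} ∧
    ¬ (∀ y : ℝ, h₀ v + 1 / (2 * γ) * (v - v) ^ 2
        ≤ h₀ y + 1 / (2 * γ) * (y - v) ^ 2) := by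
  haveI : Nonempty (Fin J) := ⟨⟨0, hJ⟩⟩
  set φ : ℝ → ℝ := fun x => h₀ x + 1 / (2 * γ) * (x - v) ^ 2 with hφ
  -- h₀ at b j
  have hb' : ∀ j : Fin J, h₀ (b j) = -lam * c j := by
    intro j
    rw [hh₀]
    rw [Finset.sum_eq_single j]
    · simp
    · intro j' _ hj'
      have : b j ≠ b j' := fun h => hj' (hb h).symm
      simp [this]
    · simp
  -- h₀ outside range
  have h0out : ∀ x : ℝ, x ∉ Set.range b → h₀ x = 0 := by
    intro x hx
    rw [hh₀]
    apply Finset.sum_eq_zero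
    intro j _
    have : x ≠ b j := fun h => hx ⟨j, h.symm⟩
    simp [this]
  have hφb : ∀ j : Fin J, φ (b j) = f j := by
    intro j; simp [hφ, hb' j, hf j]
  -- m attained
  obtain ⟨j₀, hj₀⟩ := Finite.exists_min f
  have hmf : m = f j₀ := by
    rw [hm]
    apply le_antisymm (ciInf_le (Finite.bddBelow_range f) j₀)
    exact le_ciInf hj₀
  have hmle : ∀ j, m ≤ f j := by intro j; rw [hmf]; exact hj₀ j
  -- φ y ≥ m for all y
  have key : ∀ y : ℝ, m ≤ φ y := by
    intro y
    by_cases hy : y ∈ Set.range b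
    · obtain ⟨j, rfl⟩ := hy
      rw [hφb]; exact hmle j
    · have h1 : h₀ y = 0 := h0out y hy
      have h2 : (0:ℝ) ≤ 1 / (2 * γ) * (y - v) ^ 2 := by positivity
      have : (0:ℝ) ≤ φ y := by simp only [hφ]; rw [h1]; linarith
      linarith
  have hφj₀ : φ (b j₀) = m := by rw [hφb, hmf]
  constructor
  · ext x
    simp only [Set.mem_setOf_eq, Set.mem_image]
    constructor
    · intro hx
      have hxm : φ x ≤ m := by rw [← hφj₀]; exact hx (b j₀)
      by_cases hxr : x ∈ Set.range b
      · obtain ⟨j, rfl⟩ := hxr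
        refine ⟨j, ?_, rfl⟩
        have := key (b j)
        rw [hφb] at hxm this
        exact le_antisymm hxm this
      · exfalso
        have h1 : h₀ x = 0 := h0out x hxr
        have h2 : (0:ℝ) ≤ 1 / (2 * γ) * (x - v) ^ 2 := by positivity
        have : (0:ℝ) ≤ φ x := by simp only [hφ]; rw [h1]; linarith
        linarith
    · rintro ⟨j, hj, rfl⟩
      intro y
      have : φ (b j) = m := by rw [hφb]; exact hj
      calc φ (b j) = m := this
        _ ≤ φ y := key y
  · intro hcon
    have hφv : φ v = 0 := by simp [hφ, h0out v hv]
    have := hcon (b j₀)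
    rw [show h₀ v + 1 / (2 * γ) * (v - v) ^ 2 = φ v from rfl] at this
    rw [show h₀ (b j₀) + 1 / (2 * γ) * (b j₀ - v) ^ 2 = φ (b j₀) from rfl] at this
    rw [hφv, hφj₀] at this
    linarith
end

section
/- Let J ≥ 1, let c_1,…,c_J > 0, λ > 0, γ > 0, and let b_1,…,b_J be distinct reals. Define h₀ : ℝ → ℝ by h₀(b_j) = −λ c_j for j = 1,…,J and h₀(x) = 0 for x ∉ {b_1,…,b_J}, and for v ∈ ℝ set f(j) = −λ c_j + (1/(2γ))(b_j − v)² and m = min_{1 ≤ j ≤ J} f(j). If v ∉ {b_1,…,b_J} and m = 0, then the set of global minimizers over ℝ of φ(x) = h₀(x) + (1/(2γ))(x − v)² is exactly {v} ∪ {b_j : f(j) = 0}. -/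
/-- Proximal operator of the weighted ℓ₀-sum, boundary case: if `v ∉ {b₁,…,b_J}`
and `m = minⱼ f(j) = 0` where `f(j) = −λcⱼ + (1/(2γ))(bⱼ − v)²`, then the set of
global minimizers of `φ(x) = h₀(x) + (1/(2γ))(x − v)²` is `{v} ∪ {bⱼ : f(j) = 0}`. -/
theorem stmt15 (J : ℕ) (hJ : 0 < J) (c b : Fin J → ℝ) (hc : ∀ j, 0 < c j)
    (lam γ : ℝ) (hlam : 0 < lam) (hγ : 0 < γ) (hb : Function.Injective b)
    (h₀ : ℝ → ℝ) (hh₀ : ∀ x, h₀ x = ∑ j, if x = b j then -lam * c j else 0)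
    (v : ℝ) (hv : v ∉ Set.range b)
    (f : Fin J → ℝ) (hf : ∀ j, f j = -lam * c j + 1 / (2 * γ) * (b j - v) ^ 2)
    (hm0 : (⨅ j, f j) = 0) :
    {x : ℝ | ∀ y : ℝ, h₀ x + 1 / (2 * γ) * (x - v) ^ 2
        ≤ h₀ y + 1 / (2 * γ) * (y - v) ^ 2}
      = {v} ∪ b '' {j | f j = 0} := by
  haveI : Nonempty (Fin J) := Fin.pos_iff_nonempty.mp hJ
  have h0b : ∀ j, h₀ (b j) = -lam * c j := by
    intro j
    rw [hh₀, Finset.sum_eq_single j]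
    · simp
    · intro i _ hij
      have : b j ≠ b i := fun h => hij (hb h.symm)
      simp [this]
    · simp
  have h0x : ∀ x, x ∉ Set.range b → h₀ x = 0 := by
    intro x hx
    rw [hh₀]
    apply Finset.sum_eq_zero
    intro i _
    simp only [ite_eq_right_iff]
    intro h; exact absurd ⟨i, h.symm⟩ hx
  have hfj : ∀ j, 0 ≤ f j := by
    intro j
    rw [← hm0]
    exact ciInf_le (Finite.bddBelow_range f) j
  have hφb : ∀ j, h₀ (b j) + 1 / (2 * γ) * (b j - v) ^ 2 = f j := by
    intro j; rw [h0b, hf]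
  have hφv : h₀ v + 1 / (2 * γ) * (v - v) ^ 2 = 0 := by
    rw [h0x v hv]; ring
  have hφnonneg : ∀ y, 0 ≤ h₀ y + 1 / (2 * γ) * (y - v) ^ 2 := by
    intro y
    by_cases hy : y ∈ Set.range b
    · obtain ⟨j, rfl⟩ := hy
      rw [hφb]; exact hfj j
    · rw [h0x y hy]
      have : 0 ≤ 1 / (2 * γ) * (y - v) ^ 2 := by positivity
      linarith
  ext x
  simp only [Set.mem_setOf_eq, Set.mem_union, Set.mem_singleton_iff, Set.mem_image,
    Set.mem_setOf_eq]
  constructor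
  · intro hx
    have hle : h₀ x + 1 / (2 * γ) * (x - v) ^ 2 ≤ 0 := by
      have := hx v; rw [hφv] at this; exact this
    by_cases hxr : x ∈ Set.range b
    · obtain ⟨j, rfl⟩ := hxr
      right; exact ⟨j, le_antisymm (by rwa [hφb] at hle) (hfj j), rfl⟩
    · left
      rw [h0x x hxr] at hle
      have h2γ : 0 < 1 / (2 * γ) := by positivity
      have hsq : (x - v) ^ 2 ≤ 0 := by nlinarith [sq_nonneg (x - v)]
      have := sq_eq_zero_iff.mp (le_antisymm hsq (sq_nonneg _))
      linarith
  · rintro (rfl | ⟨j, hj, rfl⟩)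
    · intro y; rw [hφv]; exact hφnonneg y
    · intro y; rw [hφb, hj]; exact hφnonneg y
end

section
/- Let J ≥ 1, let c_1,…,c_J > 0, λ > 0, γ > 0, and let b_1,…,b_J be distinct reals. Define h₀ : ℝ → ℝ by h₀(b_j) = −λ c_j for j = 1,…,J and h₀(x) = 0 for x ∉ {b_1,…,b_J}. Suppose v = b_i for some i ∈ {1,…,J}, and set f(j) = −λ c_j + (1/(2γ))(b_j − b_i)² and m = min_{1 ≤ j ≤ J} f(j). Then m ≤ −λ c_i < 0, and the set of global minimizers over ℝ of φ(x) = h₀(x) + (1/(2γ))(x − v)² is exactly {b_j : f(j) = m}. -/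
/-- Proximal operator of the weighted ℓ₀-sum when the query point coincides with a
breakpoint `v = bᵢ`: then `m = minⱼ f(j) ≤ −λcᵢ < 0`, and the set of global
minimizers of `φ(x) = h₀(x) + (1/(2γ))(x − v)²` is `{bⱼ : f(j) = m}`. -/
theorem stmt16 (J : ℕ) (hJ : 0 < J) (c b : Fin J → ℝ) (hc : ∀ j, 0 < c j)
    (lam γ : ℝ) (hlam : 0 < lam) (hγ : 0 < γ) (hb : Function.Injective b)
    (h₀ : ℝ → ℝ) (hh₀ : ∀ x, h₀ x = ∑ j, if x = b j then -lam * c j else 0)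
    (i : Fin J) (v : ℝ) (hv : v = b i)
    (f : Fin J → ℝ) (hf : ∀ j, f j = -lam * c j + 1 / (2 * γ) * (b j - v) ^ 2)
    (m : ℝ) (hm : m = ⨅ j, f j) :
    m ≤ -lam * c i ∧ -lam * c i < 0 ∧
    {x : ℝ | ∀ y : ℝ, h₀ x + 1 / (2 * γ) * (x - v) ^ 2
        ≤ h₀ y + 1 / (2 * γ) * (y - v) ^ 2}
      = b '' {j | f j = m} := by
  haveI : Nonempty (Fin J) := ⟨⟨0, hJ⟩⟩
  have hbdd : BddBelow (Set.range f) := (Set.finite_range f).bddBelow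
  have hmle : ∀ j, m ≤ f j := fun j => hm ▸ ciInf_le hbdd j
  have hpos : 0 < 1 / (2 * γ) := by positivity
  -- value of h₀ at breakpoints
  have hb0 : ∀ j, h₀ (b j) = -lam * c j := by
    intro j
    rw [hh₀]
    simp [hb.eq_iff]
  -- value of h₀ off the range
  have hoff : ∀ x, x ∉ Set.range b → h₀ x = 0 := by
    intro x hx
    rw [hh₀]
    refine Finset.sum_eq_zero fun j _ => ?_
    rw [if_neg fun h => hx ⟨j, h.symm⟩]
  have hfi : f i = -lam * c i := by rw [hf, hv]; ring
  have hm1 : m ≤ -lam * c i := hfi ▸ hmle i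
  have hm2 : -lam * c i < 0 := by nlinarith [hc i]
  -- the infimum is attained
  obtain ⟨j₀, hj₀⟩ := Finite.exists_min f
  have hmeq : m = f j₀ := le_antisymm (hmle j₀) (hm ▸ le_ciInf hj₀)
  have hmneg : m < 0 := lt_of_le_of_lt hm1 hm2
  refine ⟨hm1, hm2, ?_⟩
  have hphib : ∀ j, h₀ (b j) + 1 / (2 * γ) * (b j - v) ^ 2 = f j := by
    intro j; rw [hb0, hf]
  ext x
  simp only [Set.mem_setOf_eq, Set.mem_image]
  constructor
  · intro hx
    -- x must be in the range of b, since φ(x) ≤ φ(b j₀) = m < 0 ≤ q(x)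
    by_cases hxr : x ∈ Set.range b
    · obtain ⟨j, rfl⟩ := hxr
      refine ⟨j, ?_, rfl⟩
      have h1 : f j ≤ f j₀ := by
        have := hx (b j₀)
        rwa [hphib, hphib] at this
      exact le_antisymm (hmeq ▸ h1) (hmle j)
    · exfalso
      have := hx (b j₀)
      rw [hphib, hoff x hxr, zero_add] at this
      have h0 : (0:ℝ) ≤ 1 / (2 * γ) * (x - v) ^ 2 := by positivity
      linarith [hmeq ▸ hmneg]
  · rintro ⟨j, hj, rfl⟩
    intro y
    rw [hphib, hj]
    by_cases hyr : y ∈ Set.range b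
    · obtain ⟨k, rfl⟩ := hyr
      rw [hphib]
      exact hmle k
    · rw [hoff y hyr, zero_add]
      have h0 : (0:ℝ) ≤ 1 / (2 * γ) * (y - v) ^ 2 := by positivity
      linarith
end
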